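/- Fix p ≥ 1. Let T be an order-p corner tree, i.e., a finite rooted tree with vertex labels f : ℝ^d → ℝ and edge labels ℓ ∈ {-, =, +}^p, where for ℓ = (ℓ_1, ..., ℓ_p) the predicate ℓ(r, s) on points r, s ∈ ℤ^p holds iff for every i ∈ [p]: r_i < s_i if ℓ_i = +, r_i = s_i if ℓ_i is =, and r_i > s_i if ℓ_i = -. Then for every data array z : [0,T_1] × ⋯ × [0,T_p] → ℝ^d, CTS(T, z) = ∑_{r ∈ [0,T_1]×⋯×[0,T_p]} CTPS(T, z)_r, where CTS(T, z) := ∑_{r : V(T) → grid, ALLOWED(T,r)} ∏_{i=1}^n 𝔳(v_i)(z_{r^i}), ALLOWED(T, r) := ⋀_{e ∈ E(T)} 𝔢(e)(r^{source(e)}, r^{target(e)}), and CTPS is defined recursively by CTPS(T, z)_t = 𝔳(v_1)(z_t) for the single-vertex tree and CTPS(T, z)_t = 𝔳(v_1)(z_t) · ∏_{e = (v_1, v_i) ∈ E(T)} CUMSUM(𝔢(e), CTPS(T|_{v_i}, z))_t otherwise, with CUMSUM(ℓ, x)_t := ∑_{r : ℓ(t, r)} x_r. -/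

import Mathlib

open scoped Classical

/-- The three elementary direction symbols `-`, `=`, `+`. -/
inductive Sign : Type where
  | neg | eq | pos
  deriving DecidableEq

/-- The predicate on a pair of integer coordinates denoted by a symbol:
`+` means `<`, `=` means `=`, `-` means `>`. -/
def Sign.rel : Sign → ℤ → ℤ → Prop
  | .pos, a, b => a < b
  | .eq,  a, b => a = b
  | .neg, a, b => a > b

/-- For an edge label `ℓ ∈ {-, =, +}^p`, the predicate `ℓ(r, s)` on points
`r, s ∈ ℤ^p`: for every coordinate `i`, `rᵢ < sᵢ` if `ℓᵢ = +`, `rᵢ = sᵢ` if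
`ℓᵢ` is `=`, and `rᵢ > sᵢ` if `ℓᵢ = -`. -/
def dirPred {p : ℕ} (ℓ : Fin p → Sign) (r s : Fin p → ℤ) : Prop :=
  ∀ i : Fin p, (ℓ i).rel (r i) (s i)

/-- A corner tree: a finite rooted tree (edges directed away from the root) with
vertex labels in `F` and edge labels in `L`.  A node carries its vertex label, the
number `k` of children, the labels of the `k` outgoing edges, and the `k` subtrees. -/
inductive CTree (L F : Type) : Type where
  | node (f : F) (k : ℕ) (dir : Fin k → L) (child : Fin k → CTree L F)

namespace CTree

variable {L F G : Type}

/-- The vertex set `V(T)` of a corner tree; `none` is the root, and `some ⟨i, v⟩` is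
the vertex `v` of the `i`-th subtree. -/
def Vertex : CTree L F → Type
  | node _ k _ child => Option ((i : Fin k) × Vertex (child i))

/-- The root vertex `v₁` of a corner tree. -/
def rootVertex : (T : CTree L F) → T.Vertex
  | node _ _ _ _ => none

instance fintypeVertex : (T : CTree L F) → Fintype T.Vertex
  | node _ k _ child =>
    haveI : ∀ i : Fin k, Fintype (Vertex (child i)) := fun i => fintypeVertex (child i)
    inferInstanceAs (Fintype (Option ((i : Fin k) × Vertex (child i))))

/-- `ALLOWED(T, r)`: the conjunction, over all edges `e` of `T`, of the predicate of
the edge label of `e` applied to `(r^(source e), r^(target e))`. -/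
def Allowed (pred : L → G → G → Prop) : (T : CTree L F) → (T.Vertex → G) → Prop
  | node _ k dir child, r => ∀ i : Fin k,
      pred (dir i) (r none) (r (some ⟨i, rootVertex (child i)⟩)) ∧
      Allowed pred (child i) (fun v => r (some ⟨i, v⟩))

end CTree

/-- An order-`p` corner tree: edge labels in `{-, =, +}^p`, vertex labels `ℝ^d → ℝ`. -/
abbrev PCTree (p d : ℕ) : Type := CTree (Fin p → Sign) ((Fin d → ℝ) → ℝ)

/-- The integer grid `[0,T₁] × ⋯ × [0,T_p]`. -/
abbrev GridP {p : ℕ} (Ts : Fin p → ℕ) : Type := (i : Fin p) → Fin (Ts i + 1)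

/-- A grid point, viewed as a point of `ℤ^p`. -/
def gridToZ {p : ℕ} {Ts : Fin p → ℕ} (t : GridP Ts) : Fin p → ℤ := fun i => (t i : ℤ)

/-- The product `∏_{i=1}^n 𝔳(vᵢ)(z_{r^i})` of the vertex-label evaluations along an
assignment `r : V(T) → [0,T₁]×⋯×[0,T_p]`. -/
noncomputable def vertexProd {p d : ℕ} {Ts : Fin p → ℕ} (z : GridP Ts → Fin d → ℝ) :
    (T : PCTree p d) → (T.Vertex → GridP Ts) → ℝ
  | .node f k _ child, r =>
      f (z (r none)) * ∏ i : Fin k, vertexProd z (child i) (fun v => r (some ⟨i, v⟩))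

/-- The corner tree sum
`CTS(T, z) = ∑_{r : V(T) → grid, ALLOWED(T,r)} ∏ᵢ 𝔳(vᵢ)(z_{r^i})`. -/
noncomputable def CTS {p d : ℕ} {Ts : Fin p → ℕ} (T : PCTree p d)
    (z : GridP Ts → Fin d → ℝ) : ℝ :=
  ∑ r ∈ Finset.univ.filter
      (fun r : T.Vertex → GridP Ts => CTree.Allowed dirPred T (fun v => gridToZ (r v))),
    vertexProd z T r

/-- The corner-tree pre-sum `CTPS(T, z)`, defined recursively:
`CTPS(T,z)_t = 𝔳(v₁)(z_t) ⬝ ∏_{e=(v₁,vᵢ)} CUMSUM(𝔢(e), CTPS(T|_{vᵢ}, z))_t`,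
where `CUMSUM(ℓ, x)_t = ∑_{r : ℓ(t,r)} x_r`; for a single-vertex tree the product is
empty and `CTPS(T,z)_t = 𝔳(v₁)(z_t)`. -/
noncomputable def CTPS {p d : ℕ} {Ts : Fin p → ℕ} (z : GridP Ts → Fin d → ℝ) :
    PCTree p d → GridP Ts → ℝ
  | .node f k dir child, t =>
      f (z t) * ∏ i : Fin k,
        ∑ r ∈ Finset.univ.filter (fun r : GridP Ts => dirPred (dir i) (gridToZ t) (gridToZ r)),
          CTPS z (child i) r

/- `CTPS(T, z)_t` is the sum of the vertex products over the allowed assignments `r` with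
`r(v₁) = t`; summing over `t` gives `CTS(T, z)`. For `T` with root label `f` and subtrees `Tᵢ`,
an allowed assignment rooted at `t` is a family of allowed assignments `rᵢ` of the `Tᵢ` with
`𝔢(eᵢ)(t, rᵢ(rootᵢ))`, chosen independently, so by distributivity the sum is `f(z_t)` times the
product over `i` of the sums over such `rᵢ`. Grouping the `rᵢ` by their root value `u` and
using induction turns the `i`-th factor into
`∑_{u : 𝔢(eᵢ)(t, u)} CTPS(Tᵢ, z)_u = CUMSUM(𝔢(eᵢ), CTPS(Tᵢ, z))_t`. -/

open Finset

namespace CTree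

variable {L F G : Type}

def nodeAssignmentEquiv (f : F) (k : ℕ) (dir : Fin k → L) (child : Fin k → CTree L F) :
    ((node f k dir child).Vertex → G) ≃ G × ∀ i, (child i).Vertex → G :=
  (Equiv.piOptionEquivProd (β := fun _ => G)).trans
    (Equiv.prodCongr (Equiv.refl G) (Equiv.piCurry fun i (_ : (child i).Vertex) => G))

end CTree

variable {p d : ℕ} (Ts : Fin p → ℕ)

noncomputable def allowedAssignments (T : PCTree p d) : Finset (T.Vertex → GridP Ts) :=
  univ.filter fun r => CTree.Allowed dirPred T (fun v => gridToZ (r v))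

variable {Ts} (z : GridP Ts → Fin d → ℝ)

theorem CTS_eq_sum_allowedAssignments (T : PCTree p d) :
    CTS T z = ∑ r ∈ allowedAssignments Ts T, vertexProd z T r :=
  rfl

theorem sum_allowedAssignments_node_root_eq (f : (Fin d → ℝ) → ℝ) (k : ℕ)
    (dir : Fin k → Fin p → Sign) (child : Fin k → PCTree p d) (t : GridP Ts) :
    ∑ r ∈ allowedAssignments Ts (.node f k dir child) with
        r (CTree.node f k dir child).rootVertex = t,
      vertexProd z (.node f k dir child) r
      = f (z t) * ∏ i, ∑ q ∈ allowedAssignments Ts (child i) with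
          dirPred (dir i) (gridToZ t) (gridToZ (q (child i).rootVertex)),
          vertexProd z (child i) q := by
  calc _ = ∑ x ∈ {t} ×ˢ Fintype.piFinset fun i => {q ∈ allowedAssignments Ts (child i) |
          dirPred (dir i) (gridToZ t) (gridToZ (q (child i).rootVertex))},
        f (z x.1) * ∏ i, vertexProd z (child i) (x.2 i) := by
        refine sum_equiv (CTree.nodeAssignmentEquiv f k dir child) (fun r => ?_) fun r _ => rfl
        simp only [allowedAssignments, mem_filter, mem_univ, true_and, mem_product,
          mem_singleton, Fintype.mem_piFinset]
        rw [and_comm]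
        exact and_congr_right fun h => by rw [← h]; exact forall_congr' fun i => and_comm
    _ = _ := by rw [sum_product, sum_singleton, prod_univ_sum, mul_sum]

theorem CTPS_eq_sum_allowedAssignments_root_eq (T : PCTree p d) (t : GridP Ts) :
    CTPS z T t = ∑ r ∈ allowedAssignments Ts T with r T.rootVertex = t, vertexProd z T r := by
  induction T generalizing t with
  | node f k dir child ih =>
    rw [sum_allowedAssignments_node_root_eq, CTPS]
    refine congrArg _ (prod_congr rfl fun i _ => ?_)
    simp only [ih i, sum_fiberwise_eq_sum_filter, mem_filter, mem_univ, true_and]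

theorem cts_eq_sum_ctps_orderP_general {p d : ℕ} {Ts : Fin p → ℕ}
    (T : PCTree p d) (z : GridP Ts → Fin d → ℝ) :
    CTS T z = ∑ t : GridP Ts, CTPS z T t := by
  rw [CTS_eq_sum_allowedAssignments]
  simp only [CTPS_eq_sum_allowedAssignments_root_eq, sum_fiberwise]

/-- Fix `p ≥ 1`.  For every order-`p` corner tree `T` and every data
array `z : [0,T₁]×⋯×[0,T_p] → ℝ^d`,
`CTS(T, z) = ∑_{r ∈ [0,T₁]×⋯×[0,T_p]} CTPS(T, z)_r`. -/
theorem cts_eq_sum_ctps_orderP {p d : ℕ} (hp : 1 ≤ p) {Ts : Fin p → ℕ}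
    (T : PCTree p d) (z : GridP Ts → Fin d → ℝ) :
    CTS T z = ∑ t : GridP Ts, CTPS z T t :=
  cts_eq_sum_ctps_orderP_general T z
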